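/- For every integer m ≥ 0 and every complex number z with |z| < log 2, the series ∑_{ℓ ≥ 0} s_{m,ℓ} · z^ℓ / ℓ! converges and its sum equals ((e^z - 1)/(2 - e^z))^{m+1}. -/

import Mathlib

/-- `IsBPA m ℓ f` : `f` encodes a barred preferential arrangement of `[ℓ]` with `m` bars.
Each element of `[ℓ]` is assigned a section (one of the `m + 1` sections determined by the
`m` bars) together with a rank inside its section (ties are allowed: elements of the same
section with the same rank form a block); within each section the set of ranks actually used
must be an initial segment `{0, …, t-1}`, so that `f` determines, for each section, an
ordered partition of the elements assigned to it into nonempty blocks. -/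
def IsBPA (m ℓ : ℕ) (f : Fin ℓ → Fin (m + 1) × Fin ℓ) : Prop :=
  ∀ x : Fin ℓ, ∀ r : Fin ℓ, r < (f x).2 → ∃ y : Fin ℓ, (f y).1 = (f x).1 ∧ (f y).2 = r

instance (m ℓ : ℕ) : DecidablePred (IsBPA m ℓ) := fun f => by unfold IsBPA; infer_instance

/-- `bpa m ℓ` : the number of barred preferential arrangements of `[ℓ]` with `m` bars.
In particular `bpa 0 ℓ` is the number of preferential arrangements of `[ℓ]`
(the Fubini / ordered Bell number `r_ℓ`). -/
def bpa (m ℓ : ℕ) : ℕ :=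
  Fintype.card { f : Fin ℓ → Fin (m + 1) × Fin ℓ // IsBPA m ℓ f }

/-- `IsSBPA m ℓ f` : `f` encodes a *special* barred preferential arrangement, i.e. a barred
preferential arrangement in which every section is nonempty. -/
def IsSBPA (m ℓ : ℕ) (f : Fin ℓ → Fin (m + 1) × Fin ℓ) : Prop :=
  IsBPA m ℓ f ∧ ∀ j : Fin (m + 1), ∃ x : Fin ℓ, (f x).1 = j

instance (m ℓ : ℕ) : DecidablePred (IsSBPA m ℓ) := fun f => by unfold IsSBPA; infer_instance

/-- `sbpa m ℓ` : the number of special barred preferential arrangements of `[ℓ]` with `m` bars. -/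
def sbpa (m ℓ : ℕ) : ℕ :=
  Fintype.card { f : Fin ℓ → Fin (m + 1) × Fin ℓ // IsSBPA m ℓ f }

/-! Splitting off the elements of the first section gives
`s_{m+1,ℓ} = ∑_k C(ℓ,k) s_{0,k} s_{m,ℓ-k}`, so the exponential generating function of `s_{m,·}`
is the `(m+1)`-st power of that of `s_{0,·}`. A preferential arrangement of a nonempty set is a
nonempty first block followed by a preferential arrangement of the rest, so the Fubini numbers
satisfy `∑_k C(n,k) r_{n-k} = 2 r_n` for `n ≥ 1`, i.e. `e^z R(z) = 2 R(z) - 1` for their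
generating function `R`. Hence `R = 1 / (2 - e^z)`, and `s_{0,ℓ} = r_ℓ - [ℓ = 0]` has generating
function `R - 1 = (e^z - 1) / (2 - e^z)`. The same recurrence gives `r_n ≤ n! / (log 2)^n`, so all
these series converge absolutely for `|z| < log 2` and the Cauchy products are legitimate. -/

open Finset Function
open scoped Nat

section Arrangement

variable {α β ι : Type*}

/-- `f x = (section, rank)`, as in `IsBPA`, but on any type and with ranks in `ℕ`. -/
def IsArrangement (f : α → ι × ℕ) : Prop :=
  ∀ x, ∀ r < (f x).2, ∃ y, (f y).1 = (f x).1 ∧ (f y).2 = r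

def IsSpecialArrangement (f : α → ι × ℕ) : Prop :=
  IsArrangement f ∧ ∀ j, ∃ x, (f x).1 = j

theorem IsArrangement.comp_surjective {f : α → ι × ℕ} (hf : IsArrangement f) {e : β → α}
    (he : Surjective e) : IsArrangement (f ∘ e) := by
  intro x r hr
  obtain ⟨y, hy⟩ := hf (e x) r hr
  obtain ⟨y, rfl⟩ := he y
  exact ⟨y, hy⟩

theorem IsSpecialArrangement.comp_surjective {f : α → ι × ℕ} (hf : IsSpecialArrangement f)
    {e : β → α} (he : Surjective e) : IsSpecialArrangement (f ∘ e) := by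
  refine ⟨hf.1.comp_surjective he, fun j => ?_⟩
  obtain ⟨x, hx⟩ := hf.2 j
  obtain ⟨x, rfl⟩ := he x
  exact ⟨x, hx⟩

theorem isArrangement_comp_equiv {f : α → ι × ℕ} (e : β ≃ α) :
    IsArrangement (f ∘ e) ↔ IsArrangement f :=
  ⟨fun hf => by simpa [comp_assoc] using hf.comp_surjective e.symm.surjective,
    fun hf => hf.comp_surjective e.surjective⟩

theorem isSpecialArrangement_comp_equiv {f : α → ι × ℕ} (e : β ≃ α) :
    IsSpecialArrangement (f ∘ e) ↔ IsSpecialArrangement f :=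
  ⟨fun hf => by simpa [comp_assoc] using hf.comp_surjective e.symm.surjective,
    fun hf => hf.comp_surjective e.surjective⟩

theorem IsArrangement.snd_lt_card [Fintype α] {f : α → ι × ℕ} (hf : IsArrangement f) (x : α) :
    (f x).2 < Fintype.card α := by
  have hsub : range ((f x).2 + 1) ⊆ univ.image fun y => (f y).2 := by
    intro r hr
    rcases Nat.lt_succ_iff_lt_or_eq.mp (mem_range.mp hr) with hr | rfl
    · obtain ⟨y, -, hy⟩ := hf x r hr
      exact mem_image.mpr ⟨y, mem_univ y, hy⟩
    · exact mem_image_of_mem _ (mem_univ x)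
  simpa using (card_le_card hsub).trans card_image_le

instance [Fintype α] [Finite ι] : Finite {f : α → ι × ℕ // IsArrangement f} :=
  Finite.of_injective
    (fun f (x : α) => ((f.1 x).1, (⟨(f.1 x).2, f.2.snd_lt_card x⟩ : Fin (Fintype.card α))))
    fun _ _ hfg => Subtype.ext <| funext fun x => by
      have := congrFun hfg x
      simp only [Prod.mk.injEq, Fin.mk.injEq] at this
      exact Prod.ext this.1 this.2

end Arrangement

section Counting

variable {α β : Type*}

/-- Preferential arrangements are the arrangements with a single section. -/
noncomputable def numPrefArrangements (α : Type*) : ℕ :=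
  Nat.card {f : α → Fin 1 × ℕ // IsArrangement f}

noncomputable def numSpecialArrangements (m : ℕ) (α : Type*) : ℕ :=
  Nat.card {f : α → Fin (m + 1) × ℕ // IsSpecialArrangement f}

instance {ι : Type*} [Fintype α] [Finite ι] : Finite {f : α → ι × ℕ // IsSpecialArrangement f} :=
  Finite.of_injective (fun f => (⟨f.1, f.2.1⟩ : {f : α → ι × ℕ // IsArrangement f}))
    fun _ _ h => Subtype.ext (Subtype.mk.inj h)

theorem numPrefArrangements_congr (e : α ≃ β) : numPrefArrangements α = numPrefArrangements β :=
  Nat.card_congr <| (e.arrowCongr (Equiv.refl _)).subtypeEquiv fun _ =>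
    (isArrangement_comp_equiv e.symm).symm

theorem numSpecialArrangements_congr (m : ℕ) (e : α ≃ β) :
    numSpecialArrangements m α = numSpecialArrangements m β :=
  Nat.card_congr <| (e.arrowCongr (Equiv.refl _)).subtypeEquiv fun _ =>
    (isSpecialArrangement_comp_equiv e.symm).symm

theorem isBPA_iff_isArrangement {m ℓ : ℕ} (f : Fin ℓ → Fin (m + 1) × Fin ℓ) :
    IsBPA m ℓ f ↔ IsArrangement fun x => ((f x).1, ((f x).2 : ℕ)) := by
  constructor
  · intro h x r hr
    obtain ⟨y, h1, h2⟩ := h x ⟨r, hr.trans (f x).2.isLt⟩ hr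
    exact ⟨y, h1, congrArg Fin.val h2⟩
  · intro h x r hr
    obtain ⟨y, h1, h2⟩ := h x r hr
    exact ⟨y, h1, Fin.ext h2⟩

theorem sbpa_eq_numSpecialArrangements (m ℓ : ℕ) :
    sbpa m ℓ = numSpecialArrangements m (Fin ℓ) := by
  rw [sbpa, ← Nat.card_eq_fintype_card]
  exact Nat.card_congr
    { toFun := fun f => ⟨fun x => ((f.1 x).1, (f.1 x).2),
        (isBPA_iff_isArrangement _).mp f.2.1, f.2.2⟩
      invFun := fun g => ⟨fun x => ((g.1 x).1, ⟨(g.1 x).2, by simpa using g.2.1.snd_lt_card x⟩),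
        (isBPA_iff_isArrangement _).mpr g.2.1, g.2.2⟩
      left_inv := fun _ => rfl
      right_inv := fun _ => rfl }

theorem numSpecialArrangements_finset (m : ℕ) (S : Finset α) :
    numSpecialArrangements m S = sbpa m S.card := by
  rw [sbpa_eq_numSpecialArrangements, numSpecialArrangements_congr m S.equivFin]

end Counting

theorem Nat.card_eq_sum_card_fiber {γ κ : Type*} [Fintype κ] {P : γ → Prop}
    [Finite {x // P x}] (c : γ → κ) :
    Nat.card {x // P x} = ∑ k, Nat.card {x // P x ∧ c x = k} := by
  rw [← Nat.card_congr (Equiv.sigmaFiberEquiv fun x : {x // P x} => c x), Nat.card_sigma]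
  exact sum_congr rfl fun k _ => Nat.card_congr (Equiv.subtypeSubtypeEquivSubtypeInter P (c · = k))

section SplitFirstSection

variable {α : Type*} {m : ℕ} {S : Finset α}

theorem IsSpecialArrangement.restrict_section_zero {f : α → Fin (m + 2) × ℕ}
    (hf : IsSpecialArrangement f) (hS : ∀ x, (f x).1 = 0 ↔ x ∈ S) :
    IsSpecialArrangement fun x : S => ((0 : Fin 1), (f x).2) := by
  refine ⟨fun x r hr => ?_, fun j => ?_⟩
  · obtain ⟨y, hxy, hy⟩ := hf.1 x r hr
    exact ⟨⟨y, (hS y).mp (hxy.trans ((hS x).mpr x.2))⟩, rfl, hy⟩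
  · obtain ⟨x, hx⟩ := hf.2 0
    exact ⟨⟨x, (hS x).mp hx⟩, Subsingleton.elim _ _⟩

variable [Fintype α] [DecidableEq α]

theorem IsSpecialArrangement.restrict_section_ne_zero {f : α → Fin (m + 2) × ℕ}
    (hf : IsSpecialArrangement f) (hS : ∀ x, (f x).1 = 0 ↔ x ∈ S) :
    IsSpecialArrangement fun x : ↥Sᶜ => (Fin.predAbove 0 (f x).1, (f x).2) := by
  have hSc : ∀ x, (f x).1 ≠ 0 ↔ x ∈ Sᶜ := fun x => by simp [hS]
  refine ⟨fun x r hr => ?_, fun j => ?_⟩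
  · obtain ⟨y, hxy, hy⟩ := hf.1 x r hr
    exact ⟨⟨y, (hSc y).mp (hxy ▸ (hSc x).mpr x.2)⟩, by simp only [hxy], hy⟩
  · obtain ⟨x, hx⟩ := hf.2 j.succ
    exact ⟨⟨x, (hSc x).mp (hx ▸ Fin.succ_ne_zero j)⟩, by simp only [hx, Fin.predAbove_zero_succ]⟩

def glueSections (S : Finset α) (g : S → Fin 1 × ℕ) (h : ↥Sᶜ → Fin (m + 1) × ℕ) (x : α) :
    Fin (m + 2) × ℕ :=
  if hx : x ∈ S then (0, (g ⟨x, hx⟩).2)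
  else ((h ⟨x, mem_compl.mpr hx⟩).1.succ, (h ⟨x, mem_compl.mpr hx⟩).2)

theorem glueSections_of_mem {g : S → Fin 1 × ℕ} {h : ↥Sᶜ → Fin (m + 1) × ℕ} (x : S) :
    glueSections S g h x = (0, (g x).2) := by
  simp [glueSections, x.2]

theorem glueSections_of_mem_compl {g : S → Fin 1 × ℕ} {h : ↥Sᶜ → Fin (m + 1) × ℕ} (x : ↥Sᶜ) :
    glueSections S g h x = ((h x).1.succ, (h x).2) := by
  simp [glueSections, (mem_compl.mp x.2)]

theorem isSpecialArrangement_glueSections {g : S → Fin 1 × ℕ} {h : ↥Sᶜ → Fin (m + 1) × ℕ}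
    (hg : IsSpecialArrangement g) (hh : IsSpecialArrangement h) :
    IsSpecialArrangement (glueSections S g h) := by
  have hsplit (x : α) : (∃ y : S, y.1 = x) ∨ ∃ y : ↥Sᶜ, y.1 = x := by
    by_cases hx : x ∈ S
    · exact .inl ⟨⟨x, hx⟩, rfl⟩
    · exact .inr ⟨⟨x, mem_compl.mpr hx⟩, rfl⟩
  refine ⟨fun x r hr => ?_, fun j => ?_⟩
  · rcases hsplit x with ⟨x, rfl⟩ | ⟨x, rfl⟩
    · rw [glueSections_of_mem] at hr ⊢
      obtain ⟨y, -, hy⟩ := hg.1 x r hr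
      exact ⟨y, by rw [glueSections_of_mem], by rw [glueSections_of_mem, hy]⟩
    · rw [glueSections_of_mem_compl] at hr ⊢
      obtain ⟨y, hxy, hy⟩ := hh.1 x r hr
      exact ⟨y, by rw [glueSections_of_mem_compl, hxy], by rw [glueSections_of_mem_compl, hy]⟩
  · induction j using Fin.cases with
    | zero =>
      obtain ⟨x, -⟩ := hg.2 0
      exact ⟨x, by rw [glueSections_of_mem]⟩
    | succ j =>
      obtain ⟨x, hx⟩ := hh.2 j
      exact ⟨x, by rw [glueSections_of_mem_compl, hx]⟩

theorem glueSections_fst_eq_zero_iff {g : S → Fin 1 × ℕ} {h : ↥Sᶜ → Fin (m + 1) × ℕ} (x : α) :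
    (glueSections S g h x).1 = 0 ↔ x ∈ S := by
  by_cases hx : x ∈ S <;> simp [glueSections, hx, Fin.succ_ne_zero]

variable (m S) in
def splitFirstSection :
    {f : α → Fin (m + 2) × ℕ // IsSpecialArrangement f ∧ ∀ x, (f x).1 = 0 ↔ x ∈ S} ≃
      {g : S → Fin 1 × ℕ // IsSpecialArrangement g} ×
        {h : ↥Sᶜ → Fin (m + 1) × ℕ // IsSpecialArrangement h} where
  toFun f := (⟨_, f.2.1.restrict_section_zero f.2.2⟩, ⟨_, f.2.1.restrict_section_ne_zero f.2.2⟩)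
  invFun p := ⟨glueSections S p.1.1 p.2.1, isSpecialArrangement_glueSections p.1.2 p.2.2,
    glueSections_fst_eq_zero_iff⟩
  left_inv f := by
    obtain ⟨f, hf, hS⟩ := f
    refine Subtype.ext (funext fun x => ?_)
    by_cases hx : x ∈ S
    · simp only [glueSections, dif_pos hx]
      exact Prod.ext ((hS x).mpr hx).symm rfl
    · have h0 : (f x).1 ≠ 0 := fun h => hx ((hS x).mp h)
      simp [glueSections, hx, h0]
  right_inv p := by
    refine Prod.ext (Subtype.ext (funext fun x => ?_)) (Subtype.ext (funext fun x => ?_))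
    · dsimp only
      rw [glueSections_of_mem]
      exact Prod.ext (Subsingleton.elim _ _) rfl
    · simp [glueSections_of_mem_compl]

end SplitFirstSection

theorem numSpecialArrangements_succ {α : Type*} [Fintype α] [DecidableEq α] (m : ℕ) :
    numSpecialArrangements (m + 1) α =
      ∑ S : Finset α, numSpecialArrangements 0 S * numSpecialArrangements m ↥Sᶜ := by
  rw [numSpecialArrangements,
    Nat.card_eq_sum_card_fiber fun f : α → Fin (m + 2) × ℕ => univ.filter fun x => (f x).1 = 0]
  refine sum_congr rfl fun S _ => ?_
  rw [numSpecialArrangements, numSpecialArrangements, ← Nat.card_prod]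
  refine Nat.card_congr ((Equiv.subtypeEquivRight fun f => ?_).trans (splitFirstSection m S))
  simp [Finset.ext_iff]

theorem sbpa_succ (m ℓ : ℕ) :
    sbpa (m + 1) ℓ = ∑ k ∈ range (ℓ + 1), ℓ.choose k * sbpa 0 k * sbpa m (ℓ - k) := by
  rw [sbpa_eq_numSpecialArrangements, numSpecialArrangements_succ, ← powerset_univ]
  simp_rw [numSpecialArrangements_finset, card_compl, Fintype.card_fin]
  rw [sum_powerset_apply_card fun k => sbpa 0 k * sbpa m (ℓ - k)]
  simp [mul_assoc]

section SplitFirstBlock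

variable {α : Type*} {S : Finset α}

theorem IsArrangement.exists_snd_eq_zero {ι : Type*} [Nonempty α] {f : α → ι × ℕ}
    (hf : IsArrangement f) : ∃ x, (f x).2 = 0 := by
  obtain ⟨x⟩ := ‹Nonempty α›
  rcases Nat.eq_zero_or_pos (f x).2 with hx | hx
  · exact ⟨x, hx⟩
  · obtain ⟨y, -, hy⟩ := hf x 0 hx
    exact ⟨y, hy⟩

variable [Fintype α] [DecidableEq α]

theorem IsArrangement.restrict_snd_ne_zero {f : α → Fin 1 × ℕ} (hf : IsArrangement f)
    (hS : ∀ x, (f x).2 = 0 ↔ x ∈ S) :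
    IsArrangement fun x : ↥Sᶜ => ((f x).1, (f x).2 - 1) := by
  intro x r hr
  dsimp only at hr ⊢
  obtain ⟨y, -, hy⟩ := hf x (r + 1) (by omega)
  have hyS : y ∈ Sᶜ := mem_compl.mpr fun h => by simp [(hS y).mpr h] at hy
  exact ⟨⟨y, hyS⟩, Subsingleton.elim _ _, by simp [hy]⟩

def prependBlock (S : Finset α) (h : ↥Sᶜ → Fin 1 × ℕ) (x : α) : Fin 1 × ℕ :=
  if hx : x ∈ S then (0, 0) else (0, (h ⟨x, mem_compl.mpr hx⟩).2 + 1)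

theorem prependBlock_of_mem {h : ↥Sᶜ → Fin 1 × ℕ} {x : α} (hx : x ∈ S) :
    prependBlock S h x = (0, 0) := by
  simp [prependBlock, hx]

theorem prependBlock_of_mem_compl {h : ↥Sᶜ → Fin 1 × ℕ} (x : ↥Sᶜ) :
    prependBlock S h x = (0, (h x).2 + 1) := by
  simp [prependBlock, mem_compl.mp x.2]

theorem prependBlock_snd_eq_zero_iff {h : ↥Sᶜ → Fin 1 × ℕ} (x : α) :
    (prependBlock S h x).2 = 0 ↔ x ∈ S := by
  by_cases hx : x ∈ S <;> simp [prependBlock, hx]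

theorem isArrangement_prependBlock (hS : S.Nonempty) {h : ↥Sᶜ → Fin 1 × ℕ}
    (hh : IsArrangement h) : IsArrangement (prependBlock S h) := by
  intro x r hr
  by_cases hx : x ∈ S
  · simp [prependBlock_of_mem hx] at hr
  obtain ⟨s, hs⟩ := hS
  rw [show x = (⟨x, mem_compl.mpr hx⟩ : ↥Sᶜ) from rfl, prependBlock_of_mem_compl] at hr
  rcases r with _ | r
  · exact ⟨s, Subsingleton.elim _ _, by rw [prependBlock_of_mem hs]⟩
  · obtain ⟨y, -, hy⟩ := hh ⟨x, mem_compl.mpr hx⟩ r (by omega)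
    exact ⟨y, Subsingleton.elim _ _, by rw [prependBlock_of_mem_compl, hy]⟩

variable (S) in
def splitFirstBlock (hS : S.Nonempty) :
    {f : α → Fin 1 × ℕ // IsArrangement f ∧ ∀ x, (f x).2 = 0 ↔ x ∈ S} ≃
      {h : ↥Sᶜ → Fin 1 × ℕ // IsArrangement h} where
  toFun f := ⟨_, f.2.1.restrict_snd_ne_zero f.2.2⟩
  invFun h := ⟨prependBlock S h.1, isArrangement_prependBlock hS h.2, prependBlock_snd_eq_zero_iff⟩
  left_inv f := by
    obtain ⟨f, hf, hS⟩ := f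
    refine Subtype.ext (funext fun x => Prod.ext (Subsingleton.elim _ _) ?_)
    by_cases hx : x ∈ S
    · simp [prependBlock, hx, (hS x).mpr hx]
    · have h0 : (f x).2 ≠ 0 := fun h => hx ((hS x).mp h)
      simp only [prependBlock, dif_neg hx]
      omega
  right_inv h := Subtype.ext (funext fun x => Prod.ext (Subsingleton.elim _ _) (by
    dsimp only
    rw [prependBlock_of_mem_compl, Nat.add_sub_cancel]))

theorem numPrefArrangements_eq_sum [Nonempty α] :
    numPrefArrangements α = ∑ S ∈ (univ : Finset (Finset α)).erase ∅, numPrefArrangements ↥Sᶜ := by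
  set rankZero := fun f : α → Fin 1 × ℕ => univ.filter fun x => (f x).2 = 0
  have hempty : Nat.card {f // IsArrangement f ∧ rankZero f = ∅} = 0 := by
    refine Nat.card_eq_zero.mpr (.inl ⟨fun ⟨f, hf, hS⟩ => ?_⟩)
    obtain ⟨x, hx⟩ := hf.exists_snd_eq_zero
    simpa [rankZero, hx] using congrArg (x ∈ ·) hS
  rw [numPrefArrangements, Nat.card_eq_sum_card_fiber rankZero, ←
    sum_erase univ (f := fun S => Nat.card {f // IsArrangement f ∧ rankZero f = S}) hempty]
  refine sum_congr rfl fun S hS => Nat.card_congr ?_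
  refine (Equiv.subtypeEquivRight fun f => ?_).trans
    (splitFirstBlock S (nonempty_iff_ne_empty.mpr (ne_of_mem_erase hS)))
  simp [rankZero, Finset.ext_iff]

end SplitFirstBlock

noncomputable def fubini (n : ℕ) : ℕ :=
  numPrefArrangements (Fin n)

theorem numPrefArrangements_finset {α : Type*} (S : Finset α) :
    numPrefArrangements S = fubini S.card :=
  numPrefArrangements_congr S.equivFin

theorem fubini_zero : fubini 0 = 1 := by
  have : Nonempty {f : Fin 0 → Fin 1 × ℕ // IsArrangement f} :=
    ⟨⟨finZeroElim, fun x => x.elim0⟩⟩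
  exact Nat.card_unique

theorem sum_choose_mul_fubini {n : ℕ} (hn : n ≠ 0) :
    ∑ k ∈ range (n + 1), n.choose k * fubini (n - k) = 2 * fubini n := by
  have : Nonempty (Fin n) := ⟨⟨0, Nat.pos_of_ne_zero hn⟩⟩
  have hsum : ∑ S : Finset (Fin n), numPrefArrangements ↥Sᶜ =
      ∑ k ∈ range (n + 1), n.choose k * fubini (n - k) := by
    simp_rw [numPrefArrangements_finset, card_compl, Fintype.card_fin]
    rw [← powerset_univ, sum_powerset_apply_card fun k => fubini (n - k)]
    simp
  rw [← hsum, ← add_sum_erase _ _ (mem_univ ∅), ← numPrefArrangements_eq_sum, compl_empty,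
    numPrefArrangements_finset, card_univ, Fintype.card_fin, two_mul]
  rfl

theorem numPrefArrangements_eq_numSpecialArrangements_zero {α : Type*} [Nonempty α] :
    numPrefArrangements α = numSpecialArrangements 0 α :=
  Nat.card_congr <| Equiv.subtypeEquivRight fun _ =>
    ⟨fun hf => ⟨hf, fun _ => ⟨Classical.arbitrary α, Subsingleton.elim (α := Fin 1) _ _⟩⟩, And.left⟩

theorem sbpa_zero_right (m : ℕ) : sbpa m 0 = 0 := by
  rw [sbpa_eq_numSpecialArrangements]
  exact Nat.card_eq_zero.mpr (.inl ⟨fun f => (f.2.2 0).elim fun x _ => x.elim0⟩)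

theorem fubini_eq_sbpa_zero_add (n : ℕ) : fubini n = sbpa 0 n + if n = 0 then 1 else 0 := by
  rcases Nat.eq_zero_or_pos n with rfl | hn
  · simp [fubini_zero, sbpa_zero_right]
  · have : Nonempty (Fin n) := ⟨⟨0, hn⟩⟩
    simp [fubini, numPrefArrangements_eq_numSpecialArrangements_zero,
      sbpa_eq_numSpecialArrangements, hn.ne']

section ExponentialGeneratingFunction

variable (a b : ℕ → ℂ) (z : ℂ)

noncomputable def egfTerm (n : ℕ) : ℂ :=
  a n * z ^ n / n !

def binomConv (n : ℕ) : ℂ :=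
  ∑ k ∈ range (n + 1), n.choose k * a k * b (n - k)

theorem egfTerm_binomConv :
    egfTerm (binomConv a b) z =
      fun n => ∑ k ∈ range (n + 1), egfTerm a z k * egfTerm b z (n - k) := by
  ext n
  rw [egfTerm, binomConv, sum_mul, sum_div]
  refine sum_congr rfl fun k hk => ?_
  have hkn : k ≤ n := Nat.lt_succ_iff.mp (mem_range.mp hk)
  have hz : z ^ n = z ^ k * z ^ (n - k) := by rw [← pow_add, Nat.add_sub_cancel' hkn]
  have : (n ! : ℂ) ≠ 0 := Nat.cast_ne_zero.mpr n.factorial_ne_zero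
  rw [egfTerm, egfTerm, Nat.cast_choose ℂ hkn, hz]
  field_simp

theorem egfTerm_sub : egfTerm (a - b) z = egfTerm a z - egfTerm b z := by
  ext n
  simp [egfTerm, sub_mul, sub_div]

theorem egfTerm_const_smul (c : ℂ) : egfTerm (c • a) z = c • egfTerm a z := by
  ext n
  simp [egfTerm, mul_assoc, mul_div_assoc]

theorem egfTerm_single_zero (c : ℂ) : egfTerm (Pi.single 0 c) z = Pi.single 0 c := by
  ext n
  rcases eq_or_ne n 0 with rfl | hn <;> simp [egfTerm, *]

variable {a b z}

theorem summable_norm_egfTerm_binomConv (ha : Summable (‖egfTerm a z ·‖))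
    (hb : Summable (‖egfTerm b z ·‖)) : Summable (‖egfTerm (binomConv a b) z ·‖) := by
  rw [egfTerm_binomConv]
  exact summable_norm_sum_mul_range_of_summable_norm ha hb

theorem hasSum_egfTerm_binomConv {A B : ℂ} (ha : Summable (‖egfTerm a z ·‖))
    (hb : Summable (‖egfTerm b z ·‖)) (hA : HasSum (egfTerm a z) A)
    (hB : HasSum (egfTerm b z) B) : HasSum (egfTerm (binomConv a b) z) (A * B) := by
  have h := hasSum_sum_range_mul_of_summable_norm ha hb
  rwa [hA.tsum_eq, hB.tsum_eq, ← egfTerm_binomConv] at h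

variable (z)

theorem egfTerm_one : egfTerm 1 z = fun n => z ^ n / n ! := by
  ext n
  simp [egfTerm]

theorem hasSum_egfTerm_one : HasSum (egfTerm 1 z) (Complex.exp z) := by
  rw [egfTerm_one, Complex.exp_eq_exp_ℂ]
  exact NormedSpace.expSeries_div_hasSum_exp z

theorem summable_norm_egfTerm_one : Summable (‖egfTerm 1 z ·‖) := by
  simpa [egfTerm_one] using Real.summable_pow_div_factorial ‖z‖

end ExponentialGeneratingFunction

theorem fubini_eq_sum {n : ℕ} (hn : n ≠ 0) :
    fubini n = ∑ k ∈ range n, n.choose (k + 1) * fubini (n - (k + 1)) := by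
  have h := sum_choose_mul_fubini hn
  rw [sum_range_succ'] at h
  simp only [Nat.choose_zero_right, Nat.sub_zero, one_mul] at h
  omega

theorem fubini_mul_log_two_pow_le (n : ℕ) : (fubini n : ℝ) * Real.log 2 ^ n ≤ n ! := by
  induction n using Nat.strong_induction_on with
  | _ n ih =>
  rcases eq_or_ne n 0 with rfl | hn
  · simp [fubini_zero]
  set L := Real.log 2
  have hL : 0 ≤ L := (Real.log_pos one_lt_two).le
  have hterm : ∀ k ∈ range n, (n.choose (k + 1) * fubini (n - (k + 1)) : ℝ) * L ^ n ≤
      n ! * (L ^ (k + 1) / (k + 1)!) := by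
    intro k hk
    have hk : k + 1 ≤ n := mem_range.mp hk
    have hpow : L ^ n = L ^ (n - (k + 1)) * L ^ (k + 1) := by
      rw [← pow_add, Nat.sub_add_cancel hk]
    calc (n.choose (k + 1) * fubini (n - (k + 1)) : ℝ) * L ^ n
        = n.choose (k + 1) * (fubini (n - (k + 1)) * L ^ (n - (k + 1))) * L ^ (k + 1) := by
          rw [hpow]; ring
      _ ≤ n.choose (k + 1) * (n - (k + 1))! * L ^ (k + 1) := by
          gcongr; exact ih _ (by omega)
      _ = n ! * (L ^ (k + 1) / (k + 1)!) := by
          rw [← Nat.choose_mul_factorial_mul_factorial hk]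
          push_cast
          field_simp
  have hexp : ∑ k ∈ range n, L ^ (k + 1) / (k + 1)! ≤ 1 := by
    have h := Real.sum_le_exp_of_nonneg hL (n + 1)
    rw [sum_range_succ', Real.exp_log two_pos] at h
    simp only [pow_zero, Nat.factorial_zero, Nat.cast_one, div_one] at h
    linarith
  calc (fubini n : ℝ) * L ^ n
      = ∑ k ∈ range n, (n.choose (k + 1) * fubini (n - (k + 1)) : ℝ) * L ^ n := by
        rw [fubini_eq_sum hn]; push_cast; rw [sum_mul]
    _ ≤ ∑ k ∈ range n, n ! * (L ^ (k + 1) / (k + 1)!) := sum_le_sum hterm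
    _ = n ! * ∑ k ∈ range n, L ^ (k + 1) / (k + 1)! := (mul_sum ..).symm
    _ ≤ n ! := mul_le_of_le_one_right (by positivity) hexp

section EGF

variable {z : ℂ}

theorem summable_norm_egfTerm_fubini (hz : ‖z‖ < Real.log 2) :
    Summable (‖egfTerm (fun n => (fubini n : ℂ)) z ·‖) := by
  have hL : 0 < Real.log 2 := Real.log_pos one_lt_two
  refine Summable.of_nonneg_of_le (fun _ => norm_nonneg _) (fun n => ?_)
    (summable_geometric_of_lt_one (by positivity) ((div_lt_one hL).mpr hz))
  have hfac : (0 : ℝ) < n ! := by positivity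
  calc ‖egfTerm (fun n => (fubini n : ℂ)) z n‖
      = (fubini n * Real.log 2 ^ n / n !) * (‖z‖ / Real.log 2) ^ n := by
        simp only [egfTerm, norm_div, norm_mul, norm_pow, Complex.norm_natCast, div_pow]
        field_simp
    _ ≤ 1 * (‖z‖ / Real.log 2) ^ n := by
        gcongr
        exact (div_le_one hfac).mpr (fubini_mul_log_two_pow_le n)
    _ = (‖z‖ / Real.log 2) ^ n := one_mul _

theorem hasSum_egfTerm_fubini (hz : ‖z‖ < Real.log 2) :
    HasSum (egfTerm (fun n => (fubini n : ℂ)) z) (2 - Complex.exp z)⁻¹ := by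
  set b : ℕ → ℂ := fun n => (fubini n : ℂ)
  have hb := summable_norm_egfTerm_fubini hz
  obtain ⟨B, hB⟩ := hb.of_norm
  have hconv : binomConv 1 b = (2 : ℂ) • b - Pi.single 0 1 := by
    ext n
    rcases eq_or_ne n 0 with rfl | hn
    · simp [binomConv, b, fubini_zero]; norm_num
    · simp only [binomConv, Pi.one_apply, mul_one, Pi.sub_apply, Pi.smul_apply,
        Pi.single_eq_of_ne hn, sub_zero, b]
      push_cast [smul_eq_mul]
      exact_mod_cast sum_choose_mul_fubini hn
  have h₁ := hasSum_egfTerm_binomConv (summable_norm_egfTerm_one z) hb (hasSum_egfTerm_one z) hB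
  have h₂ : HasSum (egfTerm (binomConv 1 b) z) ((2 : ℂ) • B - 1) := by
    rw [hconv, egfTerm_sub, egfTerm_const_smul, egfTerm_single_zero]
    exact (hB.const_smul (2 : ℂ)).sub (hasSum_pi_single 0 (1 : ℂ))
  have hB' : (2 - Complex.exp z) * B = 1 := by
    have h := h₂.unique h₁
    rw [smul_eq_mul] at h
    linear_combination h
  rwa [← eq_inv_of_mul_eq_one_right hB']

theorem two_sub_exp_ne_zero (hz : ‖z‖ < Real.log 2) : 2 - Complex.exp z ≠ 0 := by
  have h : ‖Complex.exp z‖ < 2 := by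
    calc ‖Complex.exp z‖ = Real.exp z.re := Complex.norm_exp z
      _ ≤ Real.exp ‖z‖ := Real.exp_le_exp.mpr (Complex.re_le_norm z)
      _ < Real.exp (Real.log 2) := Real.exp_lt_exp.mpr hz
      _ = 2 := Real.exp_log two_pos
  intro h0
  rw [← sub_eq_zero.mp h0] at h
  norm_num at h

theorem summable_norm_egfTerm_sbpa_zero (hz : ‖z‖ < Real.log 2) :
    Summable (‖egfTerm (fun n => (sbpa 0 n : ℂ)) z ·‖) := by
  refine (summable_norm_egfTerm_fubini hz).of_nonneg_of_le (fun _ => norm_nonneg _) fun n => ?_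
  simp only [egfTerm, norm_div, norm_mul, Complex.norm_natCast]
  gcongr
  exact_mod_cast (fubini_eq_sbpa_zero_add n).symm ▸ Nat.le_add_right _ _

theorem hasSum_egfTerm_sbpa_zero (hz : ‖z‖ < Real.log 2) :
    HasSum (egfTerm (fun n => (sbpa 0 n : ℂ)) z) ((Complex.exp z - 1) / (2 - Complex.exp z)) := by
  have hsbpa : (fun n => (sbpa 0 n : ℂ)) = (fun n => (fubini n : ℂ)) - Pi.single 0 1 := by
    ext n
    simp only [Pi.sub_apply, fubini_eq_sbpa_zero_add]
    rcases eq_or_ne n 0 with rfl | hn <;> simp [*]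
  rw [hsbpa, egfTerm_sub, egfTerm_single_zero]
  have hq : (2 - Complex.exp z)⁻¹ - 1 = (Complex.exp z - 1) / (2 - Complex.exp z) := by
    field_simp [two_sub_exp_ne_zero hz]
    ring
  exact hq ▸ (hasSum_egfTerm_fubini hz).sub (hasSum_pi_single 0 1)

end EGF

/-- For every `m ≥ 0` and every complex `z` with `|z| < log 2`, the series
`∑_{ℓ ≥ 0} s_{m,ℓ} · z^ℓ / ℓ!` converges, with sum `((e^z - 1)/(2 - e^z))^{m+1}`. -/
theorem sbpa_egf (m : ℕ) (z : ℂ) (hz : ‖z‖ < Real.log 2) :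
    HasSum (fun ℓ : ℕ => (sbpa m ℓ : ℂ) * z ^ ℓ / (Nat.factorial ℓ : ℂ))
      (((Complex.exp z - 1) / (2 - Complex.exp z)) ^ (m + 1)) := by
  suffices Summable (‖egfTerm (fun n => (sbpa m n : ℂ)) z ·‖) ∧
      HasSum (egfTerm (fun n => (sbpa m n : ℂ)) z)
        (((Complex.exp z - 1) / (2 - Complex.exp z)) ^ (m + 1)) from this.2
  have h₀ := summable_norm_egfTerm_sbpa_zero hz
  induction m with
  | zero => exact ⟨h₀, by simpa using hasSum_egfTerm_sbpa_zero hz⟩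
  | succ m ih =>
    have hconv : binomConv (fun n => (sbpa 0 n : ℂ)) (fun n => (sbpa m n : ℂ)) =
        fun n => (sbpa (m + 1) n : ℂ) := by
      ext n
      simp [binomConv, sbpa_succ]
    rw [← hconv, pow_succ']
    exact ⟨summable_norm_egfTerm_binomConv h₀ ih.1,
      hasSum_egfTerm_binomConv h₀ ih.1 (hasSum_egfTerm_sbpa_zero hz) ih.2⟩
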